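/- In the Game of Fiduciary Transfer with a collaborative Alice–Carol context, if Bob shares Alice's secret a with Carol and Carol responds by sharing her own secret c with Alice, then the profile (c?T:B, b?N:F, c?L:R) is a Nash equilibrium with expected payoffs (12.5, 3.5, 9), strictly improving Alice's payoff over 5 and Bob's over 3 relative to the no-forwarding equilibrium (a?T:B, a?N:F, c?L:R). -/

import Mathlib

inductive ACh | T | M | B
  deriving DecidableEq
instance : Fintype ACh := ⟨{ACh.T, ACh.M, ACh.B}, fun x => by cases x <;> simp⟩
inductive BCh | N | I | F
  deriving DecidableEq
instance : Fintype BCh := ⟨{BCh.N, BCh.I, BCh.F}, fun x => by cases x <;> simp⟩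
inductive CCh | L | Cc | R
  deriving DecidableEq
instance : Fintype CCh := ⟨{CCh.L, CCh.Cc, CCh.R}, fun x => by cases x <;> simp⟩

def gACa : ACh → CCh → ℚ
  | .T, .L => 8
  | .T, .Cc => 0
  | .T, .R => -8
  | .M, .L => 2
  | .M, .Cc => 2
  | .M, .R => 2
  | .B, .L => -8
  | .B, .Cc => 0
  | .B, .R => 8

def gACc : ACh → CCh → ℚ
  | .T, .L => 8
  | .T, .Cc => 2
  | .T, .R => -8
  | .M, .L => 0
  | .M, .Cc => 2
  | .M, .R => 0
  | .B, .L => -8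
  | .B, .Cc => 2
  | .B, .R => 8

def gABa : ACh → BCh → ℚ
  | .T, .N => 5
  | .T, .I => 0
  | .T, .F => 4
  | .M, .N => 0
  | .M, .I => 0
  | .M, .F => 0
  | .B, .N => 4
  | .B, .I => 0
  | .B, .F => 5

def gABb : ACh → BCh → ℚ
  | .T, .N => 3
  | .T, .I => 0
  | .T, .F => 2
  | .M, .N => 0
  | .M, .I => 0
  | .M, .F => 0
  | .B, .N => 2
  | .B, .I => 0
  | .B, .F => 3

def gBCb : BCh → CCh → ℚ
  | .N, .L => -15
  | .N, .Cc => 0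
  | .N, .R => 17
  | .I, .L => 0
  | .I, .Cc => 0
  | .I, .R => 0
  | .F, .L => 17
  | .F, .Cc => 0
  | .F, .R => -15

def gBCc : BCh → CCh → ℚ
  | .N, .L => 17
  | .N, .Cc => 0
  | .N, .R => -15
  | .I, .L => 0
  | .I, .Cc => 0
  | .I, .R => 0
  | .F, .L => -15
  | .F, .Cc => 0
  | .F, .R => 17

def uA (x : ACh) (y : BCh) (z : CCh) : ℚ := gACa x z + gABa x y
def uB (x : ACh) (y : BCh) (z : CCh) : ℚ := gABb x y + gBCb y z
def uC (x : ACh) (y : BCh) (z : CCh) : ℚ := gACc x z + gBCc y z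

-- a is known to Bob and Carol; c is known to Alice and Carol; b is private to Bob
def EU (u : ACh → BCh → CCh → ℚ)
    (sA : Bool → Bool → ACh) (sB : Bool → Bool → BCh) (sC : Bool → Bool → CCh) : ℚ :=
  (∑ a : Bool, ∑ b : Bool, ∑ c : Bool, u (sA a c) (sB a b) (sC a c)) / 8

def Nash (sA : Bool → Bool → ACh) (sB : Bool → Bool → BCh) (sC : Bool → Bool → CCh) : Prop :=
  (∀ sA', EU uA sA' sB sC ≤ EU uA sA sB sC) ∧
  (∀ sB', EU uB sA sB' sC ≤ EU uB sA sB sC) ∧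
  (∀ sC', EU uC sA sB sC' ≤ EU uC sA sB sC)

def sAstar : Bool → Bool → ACh := fun _ c => if c then .T else .B
def sBstar : Bool → Bool → BCh := fun _ b => if b then .N else .F
def sCstar : Bool → Bool → CCh := fun _ c => if c then .L else .R

set_option maxHeartbeats 2000000 in
/-- Collaborative fiduciary game: after Bob forwards a and Carol shares c with Alice,
the profile (c?T:B, b?N:F, c?L:R) is a Nash equilibrium paying (12.5, 3.5, 9),
strictly improving on Alice's 5 and Bob's 3. -/
theorem fiduciary_collaborative :
    Nash sAstar sBstar sCstar ∧
    EU uA sAstar sBstar sCstar = 25/2 ∧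
    EU uB sAstar sBstar sCstar = 7/2 ∧
    EU uC sAstar sBstar sCstar = 9 ∧
    (5 : ℚ) < 25/2 ∧ (3 : ℚ) < 7/2 := by
  have key : ∀ u sA sB sC, EU u sA sB sC =
      (u (sA true true) (sB true true) (sC true true) +
       u (sA true true) (sB true false) (sC true true) +
       u (sA true false) (sB true true) (sC true false) +
       u (sA true false) (sB true false) (sC true false) +
       u (sA false true) (sB false true) (sC false true) +
       u (sA false true) (sB false false) (sC false true) +
       u (sA false false) (sB false true) (sC false false) +
       u (sA false false) (sB false false) (sC false false)) / 8 := by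
    intro u sA sB sC
    simp [EU, Fintype.sum_bool]
    ring
  refine ⟨⟨?_, ?_, ?_⟩, ?_, ?_, ?_, by norm_num, by norm_num⟩
  · intro sA'
    rw [key, key]
    rcases h1 : sA' true true <;> rcases h2 : sA' true false <;>
      rcases h3 : sA' false true <;> rcases h4 : sA' false false <;>
      norm_num [sAstar, sBstar, sCstar, uA, gACa, gABa]
  · intro sB'
    rw [key, key]
    rcases h1 : sB' true true <;> rcases h2 : sB' true false <;>
      rcases h3 : sB' false true <;> rcases h4 : sB' false false <;>
      norm_num [sAstar, sBstar, sCstar, uB, gABb, gBCb]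
  · intro sC'
    rw [key, key]
    rcases h1 : sC' true true <;> rcases h2 : sC' true false <;>
      rcases h3 : sC' false true <;> rcases h4 : sC' false false <;>
      norm_num [sAstar, sBstar, sCstar, uC, gACc, gBCc]
  · rw [key]; norm_num [sAstar, sBstar, sCstar, uA, gACa, gABa]
  · rw [key]; norm_num [sAstar, sBstar, sCstar, uB, gABb, gBCb]
  · rw [key]; norm_num [sAstar, sBstar, sCstar, uC, gACc, gBCc]
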